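/- In Setup A, let S, S' ⊆ {1,…,n} be subsets containing {1,…,n'}, with integer families t = (t_i)_{i∈S} and t' = (t'_i)_{i∈S'}. If U(S,t) ⊆ U(S',t'), then S' ⊆ S and t_i ≥ t'_i for every i ∈ S'. -/

import Mathlib

open scoped RealInnerProductSpace BigOperators

noncomputable section

/-- Euclidean space `ℝⁿ` with the standard inner product. -/
abbrev E (n : ℕ) : Type := EuclideanSpace ℝ (Fin n)

/-- The index set `I' = {1,…,n'}` inside `{1,…,n}`. -/
def IprimeA (n n' : ℕ) : Finset (Fin n) := Finset.univ.filter fun i => i.val < n'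

/-- `v_{n+1} := a₁ v₁ + ⋯ + a_{n'} v_{n'}`. -/
def vLast (n n' : ℕ) (a : Fin n → ℚ) (v : Fin n → E n) : E n :=
  ∑ i ∈ IprimeA n n', (a i : ℝ) • v i

/-- `U(S,t) := {x ∈ ℝⁿ : ⟨x, v_i⟩ > t_i/r_i for all i ∈ S}`. -/
def USet (n : ℕ) (v : Fin n → E n) (r : Fin n → ℤ) (S : Finset (Fin n))
    (t : Fin n → ℤ) : Set (E n) :=
  {x | ∀ i ∈ S, ((t i : ℝ) / (r i : ℝ)) < ⟪x, v i⟫}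

/-- `t_{n+1}(t) := ⌈r_{n+1} · Σ_{k=1}^{n'} a_k t_k / r_k⌉`. -/
def tLast (n n' : ℕ) (a : Fin n → ℚ) (r : Fin n → ℤ) (rl : ℤ) (t : Fin n → ℤ) : ℤ :=
  ⌈(rl : ℚ) * ∑ k ∈ IprimeA n n', a k * (t k : ℚ) / (r k : ℚ)⌉

/-- `F(S,t) := {x ∈ U(S,t) : ⟨x, v_{n+1}⟩ > t_{n+1}(t)/r_{n+1}}`. -/
def FSetA (n n' : ℕ) (a : Fin n → ℚ) (v : Fin n → E n) (r : Fin n → ℤ) (rl : ℤ)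
    (S : Finset (Fin n)) (t : Fin n → ℤ) : Set (E n) :=
  {x | x ∈ USet n v r S t ∧
    ((tLast n n' a r rl t : ℝ) / (rl : ℝ)) < ⟪x, vLast n n' a v⟫}

/-
A linearly independent family `v` can be given arbitrary inner products, so `U(S,t)` contains
points whose `i`-th coordinate `⟪x, v i⟫` is any prescribed value above `t i / r i` (any value at
all when `i ∉ S`). Prescribing the value `t' i / r i` produces a point of `U(S,t)` outside
`U(S',t')` unless `i ∈ S` and `t' i / r i ≤ t i / r i`.
-/

open InnerProductSpace in
theorem LinearIndependent.exists_inner_eq {𝕜 F ι : Type*} [RCLike 𝕜] [NormedAddCommGroup F]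
    [InnerProductSpace 𝕜 F] [Finite ι] {v : ι → F} (hv : LinearIndependent 𝕜 v) (c : ι → 𝕜) :
    ∃ x : F, ∀ i, inner 𝕜 x (v i) = c i := by
  let W := Submodule.span 𝕜 (Set.range v)
  have : FiniteDimensional 𝕜 W := .span_of_finite 𝕜 (Set.finite_range v)
  let b := Module.Basis.span hv
  let f : StrongDual 𝕜 W := LinearMap.toContinuousLinearMap (b.constr 𝕜 c)
  refine ⟨((toDual 𝕜 W).symm f : F), fun i => ?_⟩
  rw [← Module.Basis.coe_span_apply hv i, ← Submodule.coe_inner, toDual_symm_apply]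
  exact b.constr_basis 𝕜 c i

theorem exists_mem_USet_inner_eq {n : ℕ} {v : Fin n → E n} (hv : LinearIndependent ℝ v)
    (r : Fin n → ℤ) (S : Finset (Fin n)) (t : Fin n → ℤ) (j : Fin n) {b : ℝ}
    (hb : j ∈ S → (t j : ℝ) / r j < b) :
    ∃ x ∈ USet n v r S t, ⟪x, v j⟫ = b := by
  obtain ⟨x, hx⟩ := hv.exists_inner_eq (Function.update (fun i => (t i : ℝ) / r i + 1) j b)
  refine ⟨x, fun i hi => ?_, by simpa using hx j⟩
  rw [hx i]
  rcases eq_or_ne i j with rfl | hij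
  · simpa using hb hi
  · simp [hij]

theorem mem_and_div_le_of_USet_subset {n : ℕ} {v : Fin n → E n} (hv : LinearIndependent ℝ v)
    {r : Fin n → ℤ} {S S' : Finset (Fin n)} {t t' : Fin n → ℤ}
    (hU : USet n v r S t ⊆ USet n v r S' t') {i : Fin n} (hi : i ∈ S') :
    i ∈ S ∧ (t' i : ℝ) / r i ≤ t i / r i := by
  by_contra! h
  obtain ⟨x, hxU, hx⟩ := exists_mem_USet_inner_eq hv r S t i h
  exact (hU hxU i hi).ne' hx

theorem stmt15_general (n : ℕ)
    (v : Fin n → E n) (hv : LinearIndependent ℝ v)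
    (r : Fin n → ℤ) (hr : ∀ i, 0 < r i)
    (S S' : Finset (Fin n))
    (t t' : Fin n → ℤ)
    (hU : USet n v r S t ⊆ USet n v r S' t') :
    S' ⊆ S ∧ ∀ i ∈ S', t' i ≤ t i := by
  refine ⟨fun i hi => (mem_and_div_le_of_USet_subset hv hU hi).1, fun i hi => ?_⟩
  have hri : (0 : ℝ) < r i := by exact_mod_cast hr i
  exact_mod_cast (div_le_div_iff_of_pos_right hri).1 (mem_and_div_le_of_USet_subset hv hU hi).2

/-- Setup A: if `U(S,t) ⊆ U(S',t')` then `S' ⊆ S` and `t_i ≥ t'_i`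
for every `i ∈ S'`. -/
theorem stmt15 (n n' : ℕ) (hn'1 : 1 ≤ n') (hn'n : n' ≤ n)
    (v : Fin n → E n) (hv : LinearIndependent ℝ v)
    (a : Fin n → ℚ) (ha : ∀ i : Fin n, i.val < n' → 0 < a i)
    (r : Fin n → ℤ) (hr : ∀ i, 0 < r i) (rl : ℤ) (hrl : 0 < rl)
    (S S' : Finset (Fin n)) (hS : IprimeA n n' ⊆ S) (hS' : IprimeA n n' ⊆ S')
    (t t' : Fin n → ℤ)
    (hU : USet n v r S t ⊆ USet n v r S' t') :
    S' ⊆ S ∧ ∀ i ∈ S', t' i ≤ t i :=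
  stmt15_general n v hv r hr S S' t t' hU
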